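/- arXiv:2112.10267 — 3 statements merged into one kernel-verified Lean document; each statement's English description precedes it below -/
import Mathlib

section
/- For every r ∈ (0,1) there exists a constant C_r > 0 such that for every γ > C_r there exists a probability measure ν on ℕ × ℕ with the following properties: the first marginal of ν is the Poisson distribution with mean rγ; the second marginal of ν is the Poisson distribution with mean (1−r)γ; the pushforward of ν under (x,y) ↦ x + y is the Poisson distribution with mean γ; and ν({(x,y) : x + y = 1 and y ≥ 1}) = 0 and ν({(x,y) : x + y = 2 and x ≥ 1}) = 0 (equivalently, in the coupling (X,Y), P(Y = 0 | X + Y = 1) = P(X = 0 | X + Y = 2) = 1). -/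
open MeasureTheory ProbabilityTheory Set
open scoped ENNReal NNReal Pointwise

noncomputable section

namespace PoissonSystems

/-- A Poisson coupling: a coupling of Poisson(`rγ`) and Poisson(`(1-r)γ`) random variables
whose sum is Poisson(`γ`), such that on `{sum = 1}` the second coordinate vanishes and on
`{sum = 2}` the first coordinate vanishes. -/
def IsPoissonCoupling (r γ : ℝ≥0) (ν : Measure (ℕ × ℕ)) : Prop :=
  IsProbabilityMeasure ν ∧
  ν.map Prod.fst = poissonMeasure (r * γ) ∧
  ν.map Prod.snd = poissonMeasure ((1 - r) * γ) ∧
  ν.map (fun p => p.1 + p.2) = poissonMeasure γ ∧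
  ν {p : ℕ × ℕ | p.1 + p.2 = 1 ∧ 1 ≤ p.2} = 0 ∧
  ν {p : ℕ × ℕ | p.1 + p.2 = 2 ∧ 1 ≤ p.1} = 0

section Construction

open Real


/-- Polynomial part of the coupling weights. -/
def G (s t : ℝ) (x y : ℕ) : ℝ :=
  if x = 0 ∧ y = 1 then 0
  else if x = 1 ∧ y = 0 then (s + t)
  else if x = 1 ∧ y = 1 then 0
  else if x = 2 ∧ y = 0 then 0
  else if x = 0 ∧ y = 2 then (s+t)^2/2
  else if x = 0 ∧ y = 3 then t^3/6 + t - s*t - s^2/2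
  else if x = 1 ∧ y = 2 then s*t^2/2 - s^2/2
  else if x = 2 ∧ y = 1 then s^2*t/2 + s*t + s^2/2
  else if x = 3 ∧ y = 0 then s^3/6 + s^2/2 - t
  else if x = 1 ∧ y = 3 then s*t^3/6 + s*t + s^2/2 - t
  else if x = 2 ∧ y = 2 then s^2*t^2/4 - s*t
  else if x = 3 ∧ y = 1 then s^3*t/6 + t - s^2/2
  else s^x * t^y / (x.factorial * y.factorial)

lemma G_default {s t : ℝ} {x y : ℕ} (h : 4 ≤ x ∨ 4 ≤ y ∨ 5 ≤ x + y) :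
    G s t x y = s^x * t^y / (x.factorial * y.factorial) := by
  rw [G]
  rw [if_neg (by omega), if_neg (by omega), if_neg (by omega), if_neg (by omega),
    if_neg (by omega), if_neg (by omega), if_neg (by omega), if_neg (by omega),
    if_neg (by omega), if_neg (by omega), if_neg (by omega), if_neg (by omega)]

section Real

variable {s t : ℝ} (hs : 0 < s) (ht : 0 < t)
  (h1 : s ≤ t^2) (h2 : 4 ≤ s*t) (h3 : 6*s*t + 3*s^2 ≤ t^3)
  (h4 : 6*t ≤ s^3) (h5 : 6 ≤ s*t^2)

include hs ht h1 h2 h3 h4 h5 in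
lemma G_nonneg (x y : ℕ) : 0 ≤ G s t x y := by
  by_cases hx : 4 ≤ x
  · rw [G_default (Or.inl hx)]; positivity
  · by_cases hy : 4 ≤ y
    · rw [G_default (Or.inr (Or.inl hy))]; positivity
    · push_neg at hx hy
      interval_cases x <;> interval_cases y <;>
        norm_num [G, Nat.factorial] <;>
        first
          | positivity
          | nlinarith [sq_nonneg s, sq_nonneg t, mul_pos hs ht]

end Real

/-- binomial-type identity for the generic diagonal terms -/
lemma binom_div {s t : ℝ} {n x : ℕ} (hx : x ≤ n) :
    s^x * t^(n-x) / (x.factorial * (n-x).factorial)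
      = (n.choose x : ℝ) * (s^x * t^(n-x)) / n.factorial := by
  have h1 : (x.factorial : ℝ) * (n-x).factorial ≠ 0 := by positivity
  have h2 : (n.factorial : ℝ) ≠ 0 := by positivity
  have key : ((n.choose x : ℝ)) * x.factorial * (n-x).factorial = n.factorial := by
    exact_mod_cast Nat.choose_mul_factorial_mul_factorial hx
  rw [div_eq_div_iff h1 h2, ← key]
  ring

lemma diag_fin (s t : ℝ) (n : ℕ) :
    ∑ x ∈ Finset.range (n+1), G s t x (n-x) = (s+t)^n / n.factorial := by
  by_cases hn : 5 ≤ n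
  · have : ∀ x ∈ Finset.range (n+1), G s t x (n-x)
        = (n.choose x : ℝ) * (s^x * t^(n-x)) / n.factorial := by
      intro x hx
      simp only [Finset.mem_range] at hx
      rw [G_default (by omega), binom_div (by omega)]
    rw [Finset.sum_congr rfl this, ← Finset.sum_div]
    congr 1
    rw [add_pow]
    exact Finset.sum_congr rfl (fun x hx => by ring)
  · push_neg at hn
    interval_cases n <;> norm_num [G, Finset.sum_range_succ, Nat.factorial] <;> ring

lemma row_fin (s t : ℝ) (x : ℕ) :
    ∑ y ∈ Finset.range 4, G s t x y
      = ∑ y ∈ Finset.range 4, s^x * t^y / (x.factorial * y.factorial) := by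
  by_cases hx : 4 ≤ x
  · exact Finset.sum_congr rfl (fun y _ => G_default (Or.inl hx))
  · push_neg at hx
    interval_cases x <;> norm_num [G, Finset.sum_range_succ, Nat.factorial] <;> ring

lemma col_fin (s t : ℝ) (y : ℕ) :
    ∑ x ∈ Finset.range 4, G s t x y
      = ∑ x ∈ Finset.range 4, s^x * t^y / (x.factorial * y.factorial) := by
  by_cases hy : 4 ≤ y
  · exact Finset.sum_congr rfl (fun x _ => G_default (Or.inr (Or.inl hy)))
  · push_neg at hy
    interval_cases y <;> norm_num [G, Finset.sum_range_succ, Nat.factorial] <;> ring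

/-! ### The weight function -/

lemma poissonPMF_toMeasure_eq (r : ℝ≥0) : (poissonPMF r).toMeasure = poissonMeasure r := by
  refine Measure.ext_iff_singleton.mpr fun n => ?_
  rw [PMF.toMeasure_apply_singleton _ _ (measurableSet_singleton _), poissonMeasure_singleton,
    ← poissonPMFReal_ofReal_eq_poissonPMF]
  rfl

/-- The real-valued weight function of the coupling. -/
def g (σ τ : ℝ≥0) (x y : ℕ) : ℝ :=
  (exp (-(σ:ℝ)) * exp (-(τ:ℝ))) * G (σ:ℝ) (τ:ℝ) x y

lemma pp_mul (σ τ : ℝ≥0) (x y : ℕ) :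
    poissonPMFReal σ x * poissonPMFReal τ y
      = (exp (-(σ:ℝ)) * exp (-(τ:ℝ))) * ((σ:ℝ)^x * (τ:ℝ)^y / (x.factorial * y.factorial)) := by
  unfold poissonPMFReal
  ring

lemma g_eq_default {σ τ : ℝ≥0} {x y : ℕ} (h : 4 ≤ x ∨ 4 ≤ y ∨ 5 ≤ x + y) :
    g σ τ x y = poissonPMFReal σ x * poissonPMFReal τ y := by
  rw [pp_mul, g, G_default h]

section Sums

variable (σ τ : ℝ≥0)

lemma row_summable (x : ℕ) : Summable (fun y => g σ τ x y) := by
  have hbase : Summable (fun y => poissonPMFReal σ x * poissonPMFReal τ y) :=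
    (poissonPMFRealSum τ).summable.mul_left _
  have hd : Summable (fun y => g σ τ x y - poissonPMFReal σ x * poissonPMFReal τ y) := by
    apply summable_of_ne_finset_zero (s := Finset.range 4)
    intro y hy
    simp only [Finset.mem_range, not_lt] at hy
    rw [g_eq_default (Or.inr (Or.inl hy))]; ring
  exact (hbase.add hd).congr (fun y => by ring)

lemma col_summable (y : ℕ) : Summable (fun x => g σ τ x y) := by
  have hbase : Summable (fun x => poissonPMFReal σ x * poissonPMFReal τ y) :=
    (poissonPMFRealSum σ).summable.mul_right _
  have hd : Summable (fun x => g σ τ x y - poissonPMFReal σ x * poissonPMFReal τ y) := by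
    apply summable_of_ne_finset_zero (s := Finset.range 4)
    intro x hx
    simp only [Finset.mem_range, not_lt] at hx
    rw [g_eq_default (Or.inl hx)]; ring
  exact (hbase.add hd).congr (fun x => by ring)

lemma row_tsum (x : ℕ) : ∑' y, g σ τ x y = poissonPMFReal σ x := by
  have hbase : Summable (fun y => poissonPMFReal σ x * poissonPMFReal τ y) :=
    (poissonPMFRealSum τ).summable.mul_left _
  have hzero : ∀ y ∉ Finset.range 4,
      g σ τ x y - poissonPMFReal σ x * poissonPMFReal τ y = 0 := by
    intro y hy
    simp only [Finset.mem_range, not_lt] at hy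
    rw [g_eq_default (Or.inr (Or.inl hy))]; ring
  have hd : Summable (fun y => g σ τ x y - poissonPMFReal σ x * poissonPMFReal τ y) :=
    summable_of_ne_finset_zero hzero
  have split : (fun y => g σ τ x y) = fun y =>
      poissonPMFReal σ x * poissonPMFReal τ y
        + (g σ τ x y - poissonPMFReal σ x * poissonPMFReal τ y) := by
    funext y; ring
  rw [split, Summable.tsum_add hbase hd, ((show HasSum (fun y => poissonPMFReal τ y) 1 from poissonPMFRealSum τ).mul_left _).tsum_eq,
    tsum_eq_sum hzero, Finset.sum_sub_distrib]
  have : ∑ y ∈ Finset.range 4, g σ τ x y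
      = ∑ y ∈ Finset.range 4, poissonPMFReal σ x * poissonPMFReal τ y := by
    have := row_fin (σ:ℝ) (τ:ℝ) x
    simp only [g, ← Finset.mul_sum, pp_mul]
    rw [this]
  rw [this]
  ring

lemma col_tsum (y : ℕ) : ∑' x, g σ τ x y = poissonPMFReal τ y := by
  have hbase : Summable (fun x => poissonPMFReal σ x * poissonPMFReal τ y) :=
    (poissonPMFRealSum σ).summable.mul_right _
  have hzero : ∀ x ∉ Finset.range 4,
      g σ τ x y - poissonPMFReal σ x * poissonPMFReal τ y = 0 := by
    intro x hx
    simp only [Finset.mem_range, not_lt] at hx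
    rw [g_eq_default (Or.inl hx)]; ring
  have hd : Summable (fun x => g σ τ x y - poissonPMFReal σ x * poissonPMFReal τ y) :=
    summable_of_ne_finset_zero hzero
  have split : (fun x => g σ τ x y) = fun x =>
      poissonPMFReal σ x * poissonPMFReal τ y
        + (g σ τ x y - poissonPMFReal σ x * poissonPMFReal τ y) := by
    funext x; ring
  rw [split, Summable.tsum_add hbase hd, ((show HasSum (fun x => poissonPMFReal σ x) 1 from poissonPMFRealSum σ).mul_right _).tsum_eq,
    tsum_eq_sum hzero, Finset.sum_sub_distrib]
  have : ∑ x ∈ Finset.range 4, g σ τ x y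
      = ∑ x ∈ Finset.range 4, poissonPMFReal σ x * poissonPMFReal τ y := by
    have := col_fin (σ:ℝ) (τ:ℝ) y
    simp only [g, ← Finset.mul_sum, pp_mul]
    rw [this]
  rw [this]
  ring

lemma diag_sum (n : ℕ) :
    ∑ x ∈ Finset.range (n+1), g σ τ x (n-x) = poissonPMFReal (σ + τ) n := by
  have : ∑ x ∈ Finset.range (n+1), g σ τ x (n-x)
      = (exp (-(σ:ℝ)) * exp (-(τ:ℝ))) * ∑ x ∈ Finset.range (n+1), G (σ:ℝ) (τ:ℝ) x (n-x) := by
    simp only [g]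
    rw [← Finset.mul_sum]
  rw [this, diag_fin]
  unfold poissonPMFReal
  rw [← Real.exp_add]
  push_cast
  ring_nf

end Sums

lemma exists_coupling_of (σ τ : ℝ≥0)
    (hs : 0 < (σ:ℝ)) (ht : 0 < (τ:ℝ))
    (h1 : (σ:ℝ) ≤ (τ:ℝ)^2) (h2 : 4 ≤ (σ:ℝ)*(τ:ℝ))
    (h3 : 6*(σ:ℝ)*(τ:ℝ) + 3*(σ:ℝ)^2 ≤ (τ:ℝ)^3)
    (h4 : 6*(τ:ℝ) ≤ (σ:ℝ)^3) (h5 : 6 ≤ (σ:ℝ)*(τ:ℝ)^2) :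
    ∃ ν : Measure (ℕ × ℕ), IsProbabilityMeasure ν ∧
      ν.map Prod.fst = poissonMeasure σ ∧
      ν.map Prod.snd = poissonMeasure τ ∧
      ν.map (fun p => p.1 + p.2) = poissonMeasure (σ + τ) ∧
      ν {p : ℕ × ℕ | p.1 + p.2 = 1 ∧ 1 ≤ p.2} = 0 ∧
      ν {p : ℕ × ℕ | p.1 + p.2 = 2 ∧ 1 ≤ p.1} = 0 := by
  have gnn : ∀ x y, 0 ≤ g σ τ x y := fun x y =>
    mul_nonneg (by positivity) (G_nonneg hs ht h1 h2 h3 h4 h5 x y)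
  have Wrow : ∀ x, ∑' y, ENNReal.ofReal (g σ τ x y) = poissonPMF σ x := by
    intro x
    rw [← ENNReal.ofReal_tsum_of_nonneg (fun y => gnn x y) (row_summable σ τ x), row_tsum]
    rfl
  have Wcol : ∀ y, ∑' x, ENNReal.ofReal (g σ τ x y) = poissonPMF τ y := by
    intro y
    rw [← ENNReal.ofReal_tsum_of_nonneg (fun x => gnn x y) (col_summable σ τ y), col_tsum]
    rfl
  have htot : ∑' p : ℕ × ℕ, ENNReal.ofReal (g σ τ p.1 p.2) = 1 := by
    rw [ENNReal.tsum_prod', tsum_congr (fun x => Wrow x)]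
    exact (poissonPMF σ).tsum_coe
  set P : PMF (ℕ × ℕ) := ⟨fun p => ENNReal.ofReal (g σ τ p.1 p.2), htot ▸ ENNReal.summable.hasSum⟩
    with hPdef
  have Papp : ∀ p : ℕ × ℕ, P p = ENNReal.ofReal (g σ τ p.1 p.2) := fun p => rfl
  have hfst : P.map Prod.fst = poissonPMF σ := by
    apply PMF.ext; intro k
    rw [PMF.map_apply, ENNReal.tsum_prod']
    refine (tsum_eq_single k (fun x hx => by simp [Ne.symm hx])).trans ?_
    rw [← Wrow k]
    exact tsum_congr fun y => by simp [Papp]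
  have hsnd : P.map Prod.snd = poissonPMF τ := by
    apply PMF.ext; intro k
    rw [PMF.map_apply, ENNReal.tsum_prod', ENNReal.tsum_comm]
    refine (tsum_eq_single k (fun y hy => by simp [Ne.symm hy])).trans ?_
    rw [← Wcol k]
    exact tsum_congr fun x => by simp [Papp]
  have hadd : P.map (fun p : ℕ × ℕ => p.1 + p.2) = poissonPMF (σ + τ) := by
    apply PMF.ext; intro n
    rw [PMF.map_apply, ENNReal.tsum_prod']
    refine (tsum_congr (fun x => tsum_eq_single (n - x) (fun y hy => ?_))).trans ?_
    · apply if_neg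
      intro h
      apply hy
      simp only [Prod.fst, Prod.snd] at h
      omega
    · refine (tsum_eq_sum (s := Finset.range (n+1)) (fun x hx => ?_)).trans ?_
      · apply if_neg
        intro h
        simp only [Finset.mem_range, not_lt] at hx
        simp only [Prod.fst, Prod.snd] at h
        omega
      · trans (∑ x ∈ Finset.range (n+1), ENNReal.ofReal (g σ τ x (n - x)))
        · refine Finset.sum_congr rfl (fun x hx => ?_)
          simp only [Finset.mem_range] at hx
          rw [if_pos (show n = (x, n-x).1 + (x, n-x).2 by simp; omega)]
          rfl
        · rw [← ENNReal.ofReal_sum_of_nonneg (fun x _ => gnn x (n - x)), diag_sum]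
          rfl
  refine ⟨P.toMeasure, PMF.toMeasure.isProbabilityMeasure P, ?_, ?_, ?_, ?_, ?_⟩
  · rw [PMF.toMeasure_map _ P measurable_fst, hfst]; exact poissonPMF_toMeasure_eq _
  · rw [PMF.toMeasure_map _ P measurable_snd, hsnd]; exact poissonPMF_toMeasure_eq _
  · rw [PMF.toMeasure_map (fun p : ℕ × ℕ => p.1 + p.2) P (measurable_fst.add measurable_snd), hadd]; exact poissonPMF_toMeasure_eq _
  · have e1 : {p : ℕ × ℕ | p.1 + p.2 = 1 ∧ 1 ≤ p.2} = {((0:ℕ), (1:ℕ))} := by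
      ext ⟨x, y⟩
      simp only [mem_setOf_eq, mem_singleton_iff, Prod.mk.injEq]
      omega
    rw [e1, PMF.toMeasure_apply_singleton _ _ (measurableSet_singleton _), Papp]
    simp [g, G]
  · have e2 : {p : ℕ × ℕ | p.1 + p.2 = 2 ∧ 1 ≤ p.1}
        = {((1:ℕ), (1:ℕ))} ∪ {((2:ℕ), (0:ℕ))} := by
      ext ⟨x, y⟩
      simp only [mem_setOf_eq, mem_union, mem_singleton_iff, Prod.mk.injEq]
      omega
    rw [e2]
    refine le_antisymm (le_trans (measure_union_le _ _) ?_) zero_le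
    rw [PMF.toMeasure_apply_singleton _ _ (measurableSet_singleton _),
      PMF.toMeasure_apply_singleton _ _ (measurableSet_singleton _), Papp, Papp]
    simp [g, G]

end Construction

set_option maxHeartbeats 1000000 in
/-- **Lemma 3.1.** Poisson coupling: for every `r ∈ (0,1)` there is a constant `C_r > 0`
such that for all `γ > C_r` there is a coupling of Poisson(`rγ`) and Poisson(`(1-r)γ`)
whose sum is Poisson(`γ`) and which is degenerate on the events `{sum = 1}`, `{sum = 2}`. -/
theorem exists_poisson_coupling (r : ℝ≥0) (hr0 : 0 < r) (hr1 : r < 1) :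
    ∃ C : ℝ≥0, 0 < C ∧ ∀ γ : ℝ≥0, C < γ →
      ∃ ν : Measure (ℕ × ℕ), IsPoissonCoupling r γ ν := by
  have hr1' : (0:ℝ≥0) < 1 - r := tsub_pos_of_lt hr1
  refine ⟨1/(1-r)^2 + 4/(r*(1-r)) + 9/(1-r)^3 + 6/r^3 + 6/(r*(1-r)^2), by positivity, ?_⟩
  intro γ hγ
  have hρ0 : (0:ℝ) < (r:ℝ) := hr0
  have hρ1 : (r:ℝ) < 1 := hr1
  have e1 : (0:ℝ) < 1 - (r:ℝ) := by linarith
  have hγR : (1:ℝ)/(1-(r:ℝ))^2 + 4/((r:ℝ)*(1-(r:ℝ))) + 9/(1-(r:ℝ))^3 + 6/(r:ℝ)^3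
      + 6/((r:ℝ)*(1-(r:ℝ))^2) < (γ:ℝ) := by
    have := NNReal.coe_lt_coe.mpr hγ
    push_cast [NNReal.coe_sub hr1.le] at this
    convert this using 2 <;> ring
  have pa : (0:ℝ) < 1/(1-(r:ℝ))^2 := by positivity
  have pb : (0:ℝ) < 4/((r:ℝ)*(1-(r:ℝ))) := by positivity
  have pc : (0:ℝ) < 9/(1-(r:ℝ))^3 := by positivity
  have pd : (0:ℝ) < 6/(r:ℝ)^3 := by positivity
  have pe : (0:ℝ) < 6/((r:ℝ)*(1-(r:ℝ))^2) := by positivity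
  have hA : 1/(1-(r:ℝ))^2 < (γ:ℝ) := by linarith
  have hB : 4/((r:ℝ)*(1-(r:ℝ))) < (γ:ℝ) := by linarith
  have hC : 9/(1-(r:ℝ))^3 < (γ:ℝ) := by linarith
  have hD : 6/(r:ℝ)^3 < (γ:ℝ) := by linarith
  have hE : 6/((r:ℝ)*(1-(r:ℝ))^2) < (γ:ℝ) := by linarith
  have h16 : (16:ℝ) ≤ 4/((r:ℝ)*(1-(r:ℝ))) := by
    rw [le_div_iff₀ (by positivity)]
    nlinarith [sq_nonneg (2*(r:ℝ)-1)]
  have hΓ1 : (1:ℝ) < (γ:ℝ) := by linarith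
  have hγ0 : (0:ℝ) < (γ:ℝ) := by linarith
  have cA : 1 < (γ:ℝ)*(1-(r:ℝ))^2 := by
    rw [div_lt_iff₀ (by positivity)] at hA; linarith [hA]
  have cB : 4 < (γ:ℝ)*((r:ℝ)*(1-(r:ℝ))) := by
    rw [div_lt_iff₀ (by positivity)] at hB; linarith [hB]
  have cC : 9 < (γ:ℝ)*(1-(r:ℝ))^3 := by
    rw [div_lt_iff₀ (by positivity)] at hC; linarith [hC]
  have cD : 6 < (γ:ℝ)*(r:ℝ)^3 := by
    rw [div_lt_iff₀ (by positivity)] at hD; linarith [hD]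
  have cE : 6 < (γ:ℝ)*((r:ℝ)*(1-(r:ℝ))^2) := by
    rw [div_lt_iff₀ (by positivity)] at hE; linarith [hE]
  have hσR : ((r*γ : ℝ≥0):ℝ) = (r:ℝ)*(γ:ℝ) := by push_cast; ring
  have hτR : (((1-r)*γ : ℝ≥0):ℝ) = (1-(r:ℝ))*(γ:ℝ) := by
    push_cast [NNReal.coe_sub hr1.le]; ring
  have H1 : ((r*γ : ℝ≥0):ℝ) ≤ (((1-r)*γ : ℝ≥0):ℝ)^2 := by
    rw [hσR, hτR]
    have s1 : (r:ℝ)*(γ:ℝ) ≤ (γ:ℝ) := by nlinarith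
    have s2 : (γ:ℝ) < ((1-(r:ℝ))*(γ:ℝ))^2 := by
      have := mul_lt_mul_of_pos_left cA hγ0
      nlinarith [this]
    linarith
  have H2 : 4 ≤ ((r*γ : ℝ≥0):ℝ)*(((1-r)*γ : ℝ≥0):ℝ) := by
    rw [hσR, hτR]
    nlinarith [mul_lt_mul_of_pos_right cB hγ0]
  have H3 : 6*((r*γ : ℝ≥0):ℝ)*(((1-r)*γ : ℝ≥0):ℝ) + 3*((r*γ : ℝ≥0):ℝ)^2
      ≤ (((1-r)*γ : ℝ≥0):ℝ)^3 := by
    rw [hσR, hτR]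
    have k3 : 6*(r:ℝ)*(1-(r:ℝ)) + 3*(r:ℝ)^2 ≤ 9 := by nlinarith [sq_nonneg (r:ℝ), hρ0, hρ1]
    have f1 := mul_lt_mul_of_pos_right cC (mul_pos hγ0 hγ0)
    have f2 := mul_le_mul_of_nonneg_right k3 (le_of_lt (mul_pos hγ0 hγ0))
    nlinarith [f1, f2]
  have H4 : 6*(((1-r)*γ : ℝ≥0):ℝ) ≤ ((r*γ : ℝ≥0):ℝ)^3 := by
    rw [hσR, hτR]
    have k4 : (1-(r:ℝ))*(γ:ℝ) ≤ (γ:ℝ)*(γ:ℝ) := by nlinarith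
    nlinarith [mul_lt_mul_of_pos_right cD (mul_pos hγ0 hγ0)]
  have H5 : 6 ≤ ((r*γ : ℝ≥0):ℝ)*(((1-r)*γ : ℝ≥0):ℝ)^2 := by
    rw [hσR, hτR]
    nlinarith [mul_lt_mul_of_pos_right cE (mul_pos hγ0 hγ0)]
  have hστ : r*γ + (1-r)*γ = γ := by
    rw [← add_mul, add_tsub_cancel_of_le hr1.le, one_mul]
  obtain ⟨ν, hprob, hf, hsn, hsum, z1, z2⟩ :=
    exists_coupling_of (r*γ) ((1-r)*γ)
      (by rw [hσR]; positivity) (by rw [hτR]; positivity) H1 H2 H3 H4 H5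
  rw [hστ] at hsum
  exact ⟨ν, hprob, hf, hsn, hsum, z1, z2⟩


end PoissonSystems
end
end

section
/- Let G be a nondiscrete, noncompact, locally compact, second countable, compactly generated topological group with left Haar measure λ. Then there exists a compact generating set S of G such that λ(∂(Sⁿ)) = 0 for every integer n ≥ 1, where Sⁿ is the n-fold product set {s₁s₂⋯sₙ : s₁,…,sₙ ∈ S} and ∂ denotes the topological boundary (closure minus interior). -/
open MeasureTheory ProbabilityTheory Set
open scoped ENNReal NNReal Pointwise

noncomputable section

namespace PoissonSystems

/-- A topological group is compactly generated if some compact subset `K` satisfies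
`G = ⋃_{i ≥ 1} (K ∪ K⁻¹ ∪ {e})^i`. -/
def IsCompactlyGeneratedGroup (G : Type*) [Group G] [TopologicalSpace G] : Prop :=
  ∃ K : Set G, IsCompact K ∧ ∀ g : G, ∃ n : ℕ, 1 ≤ n ∧ g ∈ (K ∪ K⁻¹ ∪ {1}) ^ n

/-!
Take a compactly supported Urysohn function `f` equal to `1` on a compact generating set and
consider its superlevel sets `S t = {t ≤ f}`, `0 < t ≤ 1`: they are compact and generate `G`.
If `s < t`, a compact set sits inside an open set with room to spare, `S t * V ⊆ {s < f}` for a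
neighbourhood `V` of `1`, whence `closure (S t ^ n) ⊆ interior (S s ^ n)`. The functions
`t ↦ λ (closure (S t ^ n))` are antitone, so all of them are continuous at some common `t₀`, and
there the squeeze `interior (S t₀ ^ n) ⊇ closure (S t ^ n)` for `t ↓ t₀` forces
`λ (closure (S t₀ ^ n)) = λ (interior (S t₀ ^ n))`.
-/

open Filter Topology

lemma exists_mem_Ioo_forall_continuousAt_of_antitone {β : Type*} [LinearOrder β]
    [TopologicalSpace β] [OrderTopology β] [SecondCountableTopology β] {H : ℕ → ℝ → β}
    (hH : ∀ n, Antitone (H n)) {a b : ℝ} (hab : a < b) :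
    ∃ t ∈ Ioo a b, ∀ n, ContinuousAt (H n) t := by
  have hcount : (⋃ n, {t | ¬ContinuousAt (H n) t}).Countable :=
    countable_iUnion fun n ↦ (hH n).countable_not_continuousAt
  obtain ⟨t, hgood, hab⟩ :=
    (hcount.dense_compl ℝ).exists_mem_open isOpen_Ioo (nonempty_Ioo.2 hab)
  exact ⟨t, hab, fun n ↦ not_not.1 fun h ↦ hgood (mem_iUnion_of_mem n h)⟩

lemma measure_frontier_eq_zero_of_continuousWithinAt {X : Type*} [TopologicalSpace X]
    [MeasurableSpace X] [OpensMeasurableSpace X] {μ : Measure X} {A : ℝ → Set X} {t₀ : ℝ}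
    (hA : ∀ t > t₀, closure (A t) ⊆ interior (A t₀))
    (hcont : ContinuousWithinAt (fun t ↦ μ (closure (A t))) (Ioi t₀) t₀)
    (hfin : μ (closure (A t₀)) ≠ ∞) : μ (frontier (A t₀)) = 0 := by
  have hle : μ (closure (A t₀)) ≤ μ (interior (A t₀)) :=
    le_of_tendsto hcont (eventually_nhdsWithin_of_forall fun t ht ↦ measure_mono (hA t ht))
  rw [frontier, measure_sdiff interior_subset_closure isOpen_interior.nullMeasurableSet
    (ne_top_of_le_ne_top hfin (measure_mono interior_subset_closure))]
  exact tsub_eq_zero_of_le hle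

lemma isCompact_setOf_le_of_hasCompactSupport {X : Type*} [TopologicalSpace X] {f : X → ℝ}
    (hf : Continuous f) (hfc : HasCompactSupport f) {t : ℝ} (ht : 0 < t) :
    IsCompact {x | t ≤ f x} :=
  hfc.of_isClosed_subset (isClosed_le continuous_const hf) fun _ hx ↦
    subset_tsupport f (ht.trans_le hx).ne'

lemma _root_.Subgroup.closure_eq_top_of_forall_mem_pow {G : Type*} [Group G] {K : Set G}
    (hK : ∀ g : G, ∃ n : ℕ, g ∈ (K ∪ K⁻¹ ∪ {1}) ^ n) : Subgroup.closure K = ⊤ := by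
  have hsub : K ∪ K⁻¹ ∪ {1} ⊆ Subgroup.closure K :=
    union_subset (union_subset Subgroup.subset_closure fun _ hx ↦ by
      simpa using (Subgroup.closure K).inv_mem (Subgroup.subset_closure hx))
      (singleton_subset_iff.2 (Subgroup.closure K).one_mem)
  exact (Subgroup.eq_top_iff' _).2 fun g ↦
    let ⟨_, hg⟩ := hK g; Subgroup.pow_subset hsub hg

lemma _root_.IsCompact.pow {M : Type*} [Monoid M] [TopologicalSpace M] [ContinuousMul M]
    {s : Set M} (hs : IsCompact s) : ∀ n : ℕ, IsCompact (s ^ n)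
  | 0 => by simp
  | n + 1 => by rw [pow_succ]; exact (hs.pow n).mul hs

section TopologicalGroup

variable {G : Type*} [Group G] [TopologicalSpace G] [IsTopologicalGroup G]

lemma closure_subset_mul_of_mem_nhds_one (A : Set G) {V : Set G} (hV : V ∈ 𝓝 1) :
    closure A ⊆ A * V :=
  (closure_subset_mul_right_of_mem_nhds_one_of_inv A (inter_mem hV (inv_mem_nhds_one G hV))
    fun _ hx ↦ ⟨hx.2, by simpa using hx.1⟩).trans (mul_subset_mul_left inter_subset_left)

lemma closure_pow_subset_interior_pow {f : G → ℝ} (hf : Continuous f) {s t : ℝ} (hst : s < t)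
    (ht : IsCompact {x | t ≤ f x}) {n : ℕ} (hn : n ≠ 0) :
    closure ({x | t ≤ f x} ^ n) ⊆ interior ({x | s ≤ f x} ^ n) := by
  obtain ⟨m, rfl⟩ := Nat.exists_eq_succ_of_ne_zero hn
  have hU : IsOpen {x | s < f x} := isOpen_lt continuous_const hf
  obtain ⟨V, hV, hVU⟩ :=
    compact_open_separated_mul_right ht hU fun x hx ↦ hst.trans_le hx
  have hmono : {x | t ≤ f x} ⊆ {x | s ≤ f x} := fun x hx ↦ hst.le.trans hx
  calc closure ({x | t ≤ f x} ^ (m + 1))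
      ⊆ {x | t ≤ f x} ^ m * ({x | t ≤ f x} * V) := by
        rw [← mul_assoc, ← pow_succ]; exact closure_subset_mul_of_mem_nhds_one _ hV
    _ ⊆ {x | s ≤ f x} ^ m * {x | s < f x} := mul_subset_mul (pow_subset_pow_left hmono) hVU
    _ ⊆ interior ({x | s ≤ f x} ^ (m + 1)) := by
        rw [pow_succ]
        exact interior_maximal (mul_subset_mul_left fun _ (hx : s < _) ↦ hx.le) hU.mul_left

end TopologicalGroup

theorem exists_generating_set_null_boundary_general
    {G : Type*} [Group G] [TopologicalSpace G] [IsTopologicalGroup G]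
    [MeasurableSpace G] [BorelSpace G] [LocallyCompactSpace G]
    (lam : Measure G) [lam.IsHaarMeasure]
    (hCG : IsCompactlyGeneratedGroup G) :
    ∃ S : Set G, IsCompact S ∧ Subgroup.closure S = ⊤ ∧
      ∀ n : ℕ, 1 ≤ n → lam (frontier (S ^ n)) = 0 := by
  obtain ⟨K, hK, hgen⟩ := hCG
  obtain ⟨f, hf1, -, hfc, -⟩ :=
    exists_continuous_one_zero_of_isCompact hK isClosed_empty (disjoint_empty K)
  have hS : ∀ t > 0, IsCompact {x | t ≤ f x} := fun t ↦
    isCompact_setOf_le_of_hasCompactSupport f.continuous hfc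
  obtain ⟨t₀, ⟨ht₀, ht₀_le⟩, hcont⟩ :=
    exists_mem_Ioo_forall_continuousAt_of_antitone
      (H := fun n t ↦ lam (closure ({x | t ≤ f x} ^ n)))
      (fun n _ _ hst ↦ measure_mono (closure_mono (pow_subset_pow_left fun _ hx ↦ hst.trans hx)))
      zero_lt_one
  have hKS : K ⊆ {x | t₀ ≤ f x} := fun x hx ↦ by simpa [hf1 hx] using ht₀_le.le
  refine ⟨{x | t₀ ≤ f x}, hS t₀ ht₀, ?_, fun n hn ↦ ?_⟩
  · exact top_unique <| (Subgroup.closure_eq_top_of_forall_mem_pow fun g ↦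
      (hgen g).imp fun _ ↦ And.right).ge.trans (Subgroup.closure_mono hKS)
  · exact measure_frontier_eq_zero_of_continuousWithinAt
      (fun t ht ↦ closure_pow_subset_interior_pow f.continuous ht (hS t (ht₀.trans ht)) (by omega))
      (hcont n).continuousWithinAt ((hS t₀ ht₀).pow n).closure.measure_lt_top.ne

/-- **Lemma 3.9.** A compactly generated, nondiscrete, noncompact, locally compact, second
countable group admits a compact generating set all of whose product-set powers have
Haar-null topological boundary. -/
theorem exists_generating_set_null_boundary
    {G : Type*} [Group G] [TopologicalSpace G] [IsTopologicalGroup G]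
    [MeasurableSpace G] [BorelSpace G] [LocallyCompactSpace G]
    [SecondCountableTopology G] [NoncompactSpace G]
    (hnd : ¬ DiscreteTopology G)
    (lam : Measure G) [lam.IsHaarMeasure]
    (hCG : IsCompactlyGeneratedGroup G) :
    ∃ S : Set G, IsCompact S ∧ Subgroup.closure S = ⊤ ∧
      ∀ n : ℕ, 1 ≤ n → lam (frontier (S ^ n)) = 0 :=
  exists_generating_set_null_boundary_general lam hCG

end PoissonSystems
end
end

section
/- Let G be a noncompact, locally compact, second countable topological group in which every compactly generated open subgroup is compact, and fix an integer n ≥ 1. Then G contains a compact, symmetric (S = S⁻¹) neighborhood S of the identity e such that Sⁿ ≠ S^{n+1}, where Sᵏ denotes the k-fold product set. -/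
/-!
Since compactly generated open subgroups are compact and `G` is not, `G` contains a strictly
increasing chain `H₀ < H₁ < ⋯ < H_m` of compact open subgroups. Pick `gᵢ ∈ H_{i+1} \ H_i`, an open
subgroup `N ≤ H₀` normalized by the compact group `H_m`, and put `S = A N` with
`A = {1, gᵢ^{±1}}`. As `A` normalizes `N`, `Sᵏ ⊆ Aᵏ N` meets at most `|A|ᵏ ≤ (2m + 2)ᵏ` cosets
of `N`. If `Sⁿ = Sⁿ⁺¹`, then `Sⁿ` is the subgroup `⟨S⟩`, and the chain `Hᵢ ∩ ⟨S⟩` forces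
`[⟨S⟩ : N] ≥ 2ᵐ`, which is impossible once `m` is large.
-/

open Filter Asymptotics
open scoped Pointwise

theorem eventually_pow_lt_two_pow (n : ℕ) : ∀ᶠ m : ℕ in atTop, (2 * m + 2) ^ n < 2 ^ m := by
  have hlin : (fun m : ℕ => (2 * m + 2 : ℝ)) =O[atTop] (fun m : ℕ => (m : ℝ)) := by
    refine IsBigO.of_bound 4 ((eventually_ge_atTop 1).mono fun m hm => ?_)
    have : (1 : ℝ) ≤ m := by exact_mod_cast hm
    rw [Real.norm_of_nonneg (by positivity), Real.norm_of_nonneg (by positivity)]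
    linarith
  have hexp := (hlin.pow n).trans_isLittleO (isLittleO_pow_const_const_pow_of_one_lt n one_lt_two)
  filter_upwards [hexp.def one_half_pos] with m hm
  rw [norm_pow, norm_pow, Real.norm_of_nonneg (by positivity), Real.norm_two] at hm
  have h2m : (0 : ℝ) < 2 ^ m := by positivity
  exact_mod_cast (hm.trans_lt (by linarith) : (2 * m + 2 : ℝ) ^ n < 2 ^ m)

namespace Subgroup

variable {G : Type*} [Group G]

open scoped Classical in
theorem iUnion_smul_subgroupOf_eq_univ_of_subset_mul {N L : Subgroup G} {B : Finset G}
    (hNL : N ≤ L) (hL : (L : Set G) ⊆ B * N) :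
    ⋃ b ∈ B.subtype (· ∈ L), b • (N.subgroupOf L : Set L) = Set.univ := by
  refine Set.eq_univ_of_forall fun x => ?_
  obtain ⟨b, hb, ν, hν, hbν⟩ := hL x.2
  have hbL : b ∈ L := by
    rw [← mul_inv_cancel_right b ν, show b * ν = x from hbν]
    exact L.mul_mem x.2 (L.inv_mem (hNL hν))
  refine Set.mem_biUnion (x := ⟨b, hbL⟩) (Finset.mem_subtype.2 hb) ⟨⟨ν, hNL hν⟩, hν, ?_⟩
  exact Subtype.ext hbν

theorem relIndex_ne_zero_of_subset_mul {N L : Subgroup G} {B : Finset G}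
    (hNL : N ≤ L) (hL : (L : Set G) ⊆ B * N) : N.relIndex L ≠ 0 :=
  have := finiteIndex_of_leftCoset_cover_const
    (iUnion_smul_subgroupOf_eq_univ_of_subset_mul hNL hL)
  FiniteIndex.index_ne_zero

theorem relIndex_le_card_of_subset_mul {N L : Subgroup G} {B : Finset G}
    (hNL : N ≤ L) (hL : (L : Set G) ⊆ B * N) : N.relIndex L ≤ B.card := by
  classical
  calc N.relIndex L ≤ (B.subtype (· ∈ L)).card :=
        index_le_of_leftCoset_cover_const (iUnion_smul_subgroupOf_eq_univ_of_subset_mul hNL hL)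
    _ ≤ B.card := by rw [Finset.card_subtype]; exact Finset.card_filter_le _ _

theorem two_pow_le_relIndex {N : Subgroup G} {L : ℕ → Subgroup G} (hL : Monotone L)
    (hNL : N ≤ L 0) {m : ℕ} (hlt : ∀ i < m, L i < L (i + 1)) (hm : N.relIndex (L m) ≠ 0) :
    2 ^ m ≤ N.relIndex (L m) := by
  induction m with
  | zero => exact Nat.one_le_iff_ne_zero.2 hm
  | succ k ih =>
    rw [← relIndex_mul_relIndex _ _ _ (hNL.trans (hL k.zero_le)) (hL (Nat.le_add_right k 1))]
      at hm ⊢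
    have hk := ih (fun i hi => hlt i (by omega)) (left_ne_zero_of_mul hm)
    have hstep : (L k).relIndex (L (k + 1)) ≠ 1 := fun h =>
      (hlt k k.lt_succ_self).not_ge (relIndex_eq_one.1 h)
    have hne : (L k).relIndex (L (k + 1)) ≠ 0 := right_ne_zero_of_mul hm
    rw [pow_succ]
    exact Nat.mul_le_mul hk (by omega)

theorem coe_closure_subset_pow {S : Set G} {n : ℕ} (hS1 : 1 ∈ S) (hSinv : S⁻¹ = S)
    (hn : S ^ n = S ^ (n + 1)) : (closure S : Set G) ⊆ S ^ n := by
  have hstable : ∀ k, S ^ (n + k) = S ^ n := by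
    intro k
    induction k with
    | zero => rfl
    | succ k ih => rw [← add_assoc, pow_succ, ih, ← pow_succ, ← hn]
  intro x hx
  induction hx using closure_induction with
  | mem x hx => rw [hn, pow_succ]; exact ⟨1, Set.one_mem_pow hS1, x, hx, one_mul x⟩
  | one => exact Set.one_mem_pow hS1
  | mul x y _ _ hx hy => rw [← hstable n, pow_add]; exact Set.mul_mem_mul hx hy
  | inv x _ hx => rw [← hSinv, inv_pow]; exact Set.inv_mem_inv.2 hx

section MulSubgroup

variable {A : Set G} {N : Subgroup G}

theorem inv_mul_subgroup_eq (hAN : A ⊆ normalizer (N : Set G)) (hAinv : A⁻¹ = A) :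
    (A * N)⁻¹ = A * N := by
  rw [mul_inv_rev, inv_coe_set, hAinv, set_mul_normalizer_comm A N hAN]

theorem mul_subgroup_pow_subset (hAN : A ⊆ normalizer (N : Set G)) (k : ℕ) :
    (A * N) ^ k ⊆ A ^ k * N := by
  induction k with
  | zero => simp
  | succ k ih =>
    calc (A * N) ^ (k + 1) = (A * N) ^ k * (A * N) := pow_succ _ _
      _ ⊆ A ^ k * N * (A * N) := Set.mul_subset_mul_right ih
      _ = A ^ k * (N * A) * N := by simp only [mul_assoc]
      _ = A ^ (k + 1) * N := by
        rw [← set_mul_normalizer_comm A N hAN, pow_succ]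
        simp only [mul_assoc, coe_mul_coe]

end MulSubgroup

theorem exists_finset_symmetric_subset [DecidableEq G] (K : Subgroup G) (g : ℕ → G) {m : ℕ}
    (hg : ∀ i < m, g i ∈ K) :
    ∃ A : Finset G, 1 ∈ A ∧ (A : Set G)⁻¹ = A ∧ (A : Set G) ⊆ K ∧ A.card ≤ 2 * m + 2 ∧
      ∀ i < m, g i ∈ A := by
  set B : Finset G := insert 1 ((Finset.range m).image g)
  have hBK : (B : Set G) ⊆ K := by
    simp only [B, Finset.coe_insert, Finset.coe_image, Finset.coe_range]
    exact Set.insert_subset K.one_mem (Set.image_subset_iff.2 hg)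
  refine ⟨B ∪ B⁻¹, Finset.mem_union_left _ (Finset.mem_insert_self _ _), ?_, ?_, ?_, fun i hi =>
    Finset.mem_union_left _ (Finset.mem_insert_of_mem (Finset.mem_image_of_mem g
      (Finset.mem_range.2 hi)))⟩
  · rw [Finset.coe_union, Set.union_inv, Finset.coe_inv, inv_inv, Set.union_comm]
  · rw [Finset.coe_union, Finset.coe_inv]
    exact Set.union_subset hBK (by rw [← inv_coe_set (H := K)]; exact Set.inv_subset_inv.2 hBK)
  · have hB : B.card ≤ m + 1 := (Finset.card_insert_le _ _).trans
      (Nat.succ_le_succ (Finset.card_image_le.trans (Finset.card_range m).le))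
    have := Finset.card_union_le B B⁻¹
    rw [Finset.card_inv] at this
    omega

theorem two_pow_le_card_pow_of_mul_pow_eq [DecidableEq G] {A : Finset G} {N : Subgroup G}
    {L : ℕ → Subgroup G} {m n : ℕ} (hA1 : 1 ∈ A) (hAinv : (A : Set G)⁻¹ = A)
    (hAN : (A : Set G) ⊆ normalizer (N : Set G)) (hL : Monotone L) (hNL : N ≤ L 0)
    (hAL : ∀ i < m, ∃ a ∈ A, a ∈ L (i + 1) ∧ a ∉ L i)
    (hpow : ((A : Set G) * N) ^ n = ((A : Set G) * N) ^ (n + 1)) :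
    2 ^ m ≤ A.card ^ n := by
  set S : Set G := A * N
  have hAS : (A : Set G) ⊆ S := Set.subset_mul_left _ N.one_mem
  have hNU : N ≤ closure S := (Set.subset_mul_right _ hA1).trans subset_closure
  have hSinv : S⁻¹ = S := inv_mul_subgroup_eq hAN hAinv
  have hcover : (L m ⊓ closure S : Set G) ⊆ ↑(A ^ n) * N := calc
    _ ⊆ S ^ n := Set.inter_subset_right.trans (coe_closure_subset_pow (hAS hA1) hSinv hpow)
    _ ⊆ _ := by rw [Finset.coe_pow]; exact mul_subgroup_pow_subset hAN n
  have hNLm : N ≤ L m ⊓ closure S := le_inf (hNL.trans (hL m.zero_le)) hNU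
  have hlt : ∀ i < m, L i ⊓ closure S < L (i + 1) ⊓ closure S := fun i hi => by
    obtain ⟨a, haA, ha, ha'⟩ := hAL i hi
    refine SetLike.lt_iff_le_and_exists.2 ⟨inf_le_inf_right _ (hL (Nat.le_add_right i 1)), a,
      mem_inf.2 ⟨ha, subset_closure (hAS haA)⟩, fun h => ha' (mem_inf.1 h).1⟩
  calc 2 ^ m ≤ N.relIndex (L m ⊓ closure S) :=
        two_pow_le_relIndex (fun i j hij => inf_le_inf_right _ (hL hij)) (le_inf hNL hNU) hlt
          (relIndex_ne_zero_of_subset_mul hNLm hcover)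
    _ ≤ (A ^ n).card := relIndex_le_card_of_subset_mul hNLm hcover
    _ ≤ A.card ^ n := Finset.card_pow_le

variable [TopologicalSpace G] [IsTopologicalGroup G]

theorem exists_isOpen_isCompact_le_normalizer {H T : Subgroup G}
    (hH : IsOpen (H : Set G)) (hT : IsCompact (T : Set G)) (hHT : H ≤ T) :
    ∃ N : Subgroup G, IsOpen (N : Set G) ∧ IsCompact (N : Set G) ∧ N ≤ H ∧
      T ≤ normalizer (N : Set G) := by
  have : CompactSpace T := isCompact_iff_compactSpace.1 hT
  have hHT_open : IsOpen (H.subgroupOf T : Set T) := by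
    rw [coe_subgroupOf]; exact hH.preimage continuous_subtype_val
  obtain ⟨N, hN⟩ := IsTopologicalGroup.exist_openNormalSubgroup_sub_clopen_nhds_of_one
    ⟨(H.subgroupOf T).isClosed_of_isOpen hHT_open, hHT_open⟩ (H.subgroupOf T).one_mem
  refine ⟨N.toSubgroup.map T.subtype, ?_, ?_, ?_, ?_⟩
  · exact (isOpen_mono hHT hH).isOpenMap_subtype_val _ N.isOpen
  · exact N.toOpenSubgroup.isClosed.isCompact.image continuous_subtype_val
  · rintro _ ⟨x, hx, rfl⟩
    exact hN hx
  · have := le_normalizer_map (H := N.toSubgroup) T.subtype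
    rwa [normalizer_eq_top, ← MonoidHom.range_eq_map, range_subtype] at this

end Subgroup

section TopologicalGroup

variable {G : Type*} [Group G] [TopologicalSpace G] [IsTopologicalGroup G]

theorem exists_isOpen_isCompact_subgroup [LocallyCompactSpace G]
    (hsub : ∀ H : Subgroup G, IsOpen (H : Set G) →
      (∃ K : Set G, IsCompact K ∧ Subgroup.closure K = H) → IsCompact (H : Set G)) :
    ∃ H : Subgroup G, IsOpen (H : Set G) ∧ IsCompact (H : Set G) := by
  obtain ⟨K, hK, hK1⟩ := exists_compact_mem_nhds (1 : G)
  have hopen := Subgroup.isOpen_of_mem_nhds _ (mem_of_superset hK1 Subgroup.subset_closure)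
  exact ⟨_, hopen, hsub _ hopen ⟨K, hK, rfl⟩⟩

theorem exists_isOpen_isCompact_subgroup_gt [NoncompactSpace G]
    (hsub : ∀ H : Subgroup G, IsOpen (H : Set G) →
      (∃ K : Set G, IsCompact K ∧ Subgroup.closure K = H) → IsCompact (H : Set G))
    {H : Subgroup G} (hHo : IsOpen (H : Set G)) (hHc : IsCompact (H : Set G)) :
    ∃ H' : Subgroup G, IsOpen (H' : Set G) ∧ IsCompact (H' : Set G) ∧ H < H' := by
  obtain ⟨x, hx⟩ := (Set.ne_univ_iff_exists_notMem _).1 hHc.ne_univ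
  have hle : H ≤ Subgroup.closure (H ∪ {x}) := fun y hy => Subgroup.subset_closure (Or.inl hy)
  have hopen := Subgroup.isOpen_mono hle hHo
  refine ⟨_, hopen, hsub _ hopen ⟨_, hHc.union isCompact_singleton, rfl⟩,
    SetLike.lt_iff_le_and_exists.2 ⟨hle, x, Subgroup.subset_closure (Or.inr rfl), hx⟩⟩

theorem exists_strictMono_isOpen_isCompact_subgroup [LocallyCompactSpace G] [NoncompactSpace G]
    (hsub : ∀ H : Subgroup G, IsOpen (H : Set G) →
      (∃ K : Set G, IsCompact K ∧ Subgroup.closure K = H) → IsCompact (H : Set G)) :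
    ∃ H : ℕ → Subgroup G, StrictMono H ∧ ∀ i, IsOpen (H i : Set G) ∧ IsCompact (H i : Set G) := by
  let P := {H : Subgroup G // IsOpen (H : Set G) ∧ IsCompact (H : Set G)}
  have : Nonempty P := let ⟨H, hH⟩ := exists_isOpen_isCompact_subgroup hsub; ⟨⟨H, hH⟩⟩
  have : NoMaxOrder P := ⟨fun H =>
    let ⟨H', hH'o, hH'c, hlt⟩ := exists_isOpen_isCompact_subgroup_gt hsub H.2.1 H.2.2
    ⟨⟨H', hH'o, hH'c⟩, hlt⟩⟩
  obtain ⟨f, hf⟩ := Nat.exists_strictMono P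
  exact ⟨fun i => (f i).1, (Subtype.strictMono_coe _).comp hf, fun i => (f i).2⟩

end TopologicalGroup

namespace PoissonSystems

theorem exists_symmetric_neighborhood_with_growing_powers_general
    {G : Type*} [Group G] [TopologicalSpace G] [IsTopologicalGroup G]
    [LocallyCompactSpace G] [NoncompactSpace G]
    (hsub : ∀ H : Subgroup G, IsOpen (H : Set G) →
      (∃ K : Set G, IsCompact K ∧ Subgroup.closure K = H) → IsCompact (H : Set G))
    (n : ℕ) :
    ∃ S : Set G, IsCompact S ∧ S = S⁻¹ ∧ S ∈ nhds (1 : G) ∧ S ^ n ≠ S ^ (n + 1) := by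
  classical
  obtain ⟨H, hH, hH_open_compact⟩ := exists_strictMono_isOpen_isCompact_subgroup hsub
  obtain ⟨m, hm⟩ := (eventually_pow_lt_two_pow n).exists
  obtain ⟨N, hN_open, hN_compact, hNH, hHN⟩ := Subgroup.exists_isOpen_isCompact_le_normalizer
    (hH_open_compact 0).1 (hH_open_compact m).2 (hH.monotone m.zero_le)
  choose g hg using fun i : ℕ => SetLike.exists_of_lt (hH i.lt_add_one)
  obtain ⟨A, hA1, hAinv, hAH, hA_card, hgA⟩ :=
    Subgroup.exists_finset_symmetric_subset (H m) g fun i hi => hH.monotone hi (hg i).1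
  have hAN : (A : Set G) ⊆ Subgroup.normalizer (N : Set G) := hAH.trans hHN
  refine ⟨A * N, A.finite_toSet.isCompact.mul hN_compact,
    (Subgroup.inv_mul_subgroup_eq hAN hAinv).symm,
    mem_of_superset (hN_open.mem_nhds N.one_mem) (Set.subset_mul_right _ hA1), fun hpow => ?_⟩
  have := Subgroup.two_pow_le_card_pow_of_mul_pow_eq hA1 hAinv hAN hH.monotone hNH
    (fun i hi => ⟨g i, hgA i hi, hg i⟩) hpow
  exact (this.trans (Nat.pow_le_pow_left hA_card n)).not_gt hm

/-- **Lemma 6.1.** If every compactly generated open subgroup of a noncompact, locally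
compact, second countable group is compact, then for each `n ≥ 1` the group contains a
compact symmetric neighborhood `S` of the identity with `Sⁿ ≠ S^{n+1}`. -/
theorem exists_symmetric_neighborhood_with_growing_powers
    {G : Type*} [Group G] [TopologicalSpace G] [IsTopologicalGroup G]
    [LocallyCompactSpace G] [SecondCountableTopology G] [NoncompactSpace G]
    (hsub : ∀ H : Subgroup G, IsOpen (H : Set G) →
      (∃ K : Set G, IsCompact K ∧ Subgroup.closure K = H) → IsCompact (H : Set G))
    (n : ℕ) (hn : 1 ≤ n) :
    ∃ S : Set G, IsCompact S ∧ S = S⁻¹ ∧ S ∈ nhds (1 : G) ∧ S ^ n ≠ S ^ (n + 1) :=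
  exists_symmetric_neighborhood_with_growing_powers_general hsub n

end PoissonSystems
end
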